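/- Let A ∈ ℝ^{n×n} be Metzler, let λ ∈ ℝ^n, and let v ∈ ℝ^n with v ≥ 0 satisfy Aλ + v < 0 (entrywise). Then for every τ ≥ 0, e^{Aτ}λ + ∫₀^{τ} e^{As} v ds ≤ λ entrywise, and the inequality is strict in every component whenever τ > 0. -/

import Mathlib

open Matrix

/-- A square real matrix is Metzler if all its off-diagonal entries are nonnegative. -/
def Metzler {n : ℕ} (A : Matrix (Fin n) (Fin n) ℝ) : Prop :=
  ∀ i j, i ≠ j → 0 ≤ A i j

/-!
By the fundamental theorem of calculus, `e^{τA}λ + ∫₀^τ e^{sA}v ds = λ + ∫₀^τ e^{sA}(Aλ + v) ds`.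
For a Metzler matrix `M` and `c` large, `M + cI` is entrywise nonnegative, so
`e^M = e^{-c} e^{M + cI} ≥ e^{-c} I` entrywise. Hence each `e^{sA}` with `s ≥ 0` maps the negative
vector `Aλ + v` to a negative vector, and the integral is negative as soon as `τ > 0`.
-/

namespace Matrix

open scoped Nat

variable {ι : Type*} [Fintype ι] [DecidableEq ι]

/- Matrices carry no global norm; statements use the product topology, and the operator norm
is opened only inside proofs that invoke Banach-algebra lemmas about `NormedSpace.exp`. -/

theorem one_apply_le_exp_apply {X : Matrix ι ι ℝ} (hX : ∀ i j, 0 ≤ X i j) (i j : ι) :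
    (1 : Matrix ι ι ℝ) i j ≤ NormedSpace.exp X i j := by
  have hexp : HasSum (fun k : ℕ => (k !⁻¹ : ℝ) • X ^ k) (NormedSpace.exp X) :=
    open scoped Norms.Operator in NormedSpace.exp_series_hasSum_exp' X
  have hsum := Pi.hasSum.mp (Pi.hasSum.mp hexp i) j
  simpa using le_hasSum hsum 0 fun k _ =>
    mul_nonneg (by positivity) (pow_apply_nonneg hX k i j)

theorem exp_add_smul_one (X : Matrix ι ι ℝ) (c : ℝ) :
    NormedSpace.exp (X + c • 1) = Real.exp c • NormedSpace.exp X := by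
  have hc : NormedSpace.exp (c • 1 : Matrix ι ι ℝ) = Real.exp c • 1 := by
    rw [← Algebra.algebraMap_eq_smul_one, ← Algebra.algebraMap_eq_smul_one, Real.exp_eq_exp_ℝ]
    open scoped Norms.Operator in exact (NormedSpace.algebraMap_exp_comm c).symm
  rw [exp_add_of_commute _ _ ((Commute.one_right X).smul_right c), hc, mul_smul_one]

theorem hasDerivAt_exp_smul_mulVec (A : Matrix ι ι ℝ) (x : ι → ℝ) (t : ℝ) :
    HasDerivAt (fun s : ℝ => NormedSpace.exp (s • A) *ᵥ x)
      (NormedSpace.exp (t • A) *ᵥ (A *ᵥ x)) t := by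
  open scoped Norms.Operator in
  ( let L : Matrix ι ι ℝ →L[ℝ] ι → ℝ :=
      (LinearMap.applyₗ x ∘ₗ toLin'.toLinearMap).toContinuousLinearMap
    rw [mulVec_mulVec]
    exact L.hasFDerivAt.comp_hasDerivAt t (hasDerivAt_exp_smul_const A t))

theorem continuous_exp_smul_mulVec (A : Matrix ι ι ℝ) (x : ι → ℝ) :
    Continuous fun s : ℝ => NormedSpace.exp (s • A) *ᵥ x :=
  continuous_iff_continuousAt.2 fun t => (hasDerivAt_exp_smul_mulVec A x t).continuousAt

theorem integral_exp_smul_mulVec_mulVec (A : Matrix ι ι ℝ) (x : ι → ℝ) (a b : ℝ) :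
    ∫ s in a..b, NormedSpace.exp (s • A) *ᵥ (A *ᵥ x)
      = NormedSpace.exp (b • A) *ᵥ x - NormedSpace.exp (a • A) *ᵥ x :=
  intervalIntegral.integral_eq_sub_of_hasDerivAt (fun t _ => hasDerivAt_exp_smul_mulVec A x t)
    ((continuous_exp_smul_mulVec A _).intervalIntegrable a b)

theorem exp_smul_mulVec_add_integral (A : Matrix ι ι ℝ) (x v : ι → ℝ) (τ : ℝ) :
    NormedSpace.exp (τ • A) *ᵥ x + ∫ s in (0 : ℝ)..τ, NormedSpace.exp (s • A) *ᵥ v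
      = x + ∫ s in (0 : ℝ)..τ, NormedSpace.exp (s • A) *ᵥ (A *ᵥ x + v) := by
  simp_rw [mulVec_add]
  rw [intervalIntegral.integral_add ((continuous_exp_smul_mulVec A _).intervalIntegrable 0 τ)
    ((continuous_exp_smul_mulVec A _).intervalIntegrable 0 τ), integral_exp_smul_mulVec_mulVec]
  simp only [zero_smul, NormedSpace.exp_zero, one_mulVec]
  abel

end Matrix

theorem eval_intervalIntegral {ι : Type*} [Fintype ι] {f : ℝ → ι → ℝ} {a b : ℝ}
    (hf : IntervalIntegrable f MeasureTheory.volume a b) (i : ι) :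
    (∫ s in a..b, f s) i = ∫ s in a..b, f s i :=
  ((ContinuousLinearMap.proj (R := ℝ) i).intervalIntegral_comp_comm hf).symm

theorem intervalIntegral_neg_of_neg_on {f : ℝ → ℝ} {a b : ℝ}
    (hf : IntervalIntegrable f MeasureTheory.volume a b) (hneg : ∀ x ∈ Set.Ioo a b, f x < 0)
    (hab : a < b) : ∫ x in a..b, f x < 0 := by
  simpa using intervalIntegral.intervalIntegral_pos_of_pos_on hf.neg
    (fun x hx => neg_pos.2 (hneg x hx)) hab

namespace Metzler

variable {n : ℕ} {M : Matrix (Fin n) (Fin n) ℝ}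

theorem smul (hM : Metzler M) {τ : ℝ} (hτ : 0 ≤ τ) : Metzler (τ • M) :=
  fun i j hij => mul_nonneg hτ (hM i j hij)

theorem exists_add_smul_one_nonneg (hM : Metzler M) : ∃ c : ℝ, ∀ i j, 0 ≤ (M + c • 1) i j := by
  refine ⟨∑ k, |M k k|, fun i j => ?_⟩
  rcases eq_or_ne i j with rfl | hij
  · have hi : |M i i| ≤ ∑ k, |M k k| :=
      Finset.single_le_sum (f := fun k => |M k k|) (fun k _ => abs_nonneg _) (Finset.mem_univ i)
    simp only [Matrix.add_apply, Matrix.smul_apply, one_apply_eq, smul_eq_mul, mul_one]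
    linarith [neg_abs_le (M i i)]
  · simpa [one_apply_ne hij] using hM i j hij

theorem exists_pos_smul_one_le_exp (hM : Metzler M) :
    ∃ r > 0, ∀ i j, r * (1 : Matrix (Fin n) (Fin n) ℝ) i j ≤ NormedSpace.exp M i j := by
  obtain ⟨c, hc⟩ := hM.exists_add_smul_one_nonneg
  refine ⟨Real.exp (-c), Real.exp_pos _, fun i j => ?_⟩
  have hexp : NormedSpace.exp M = Real.exp (-c) • NormedSpace.exp (M + c • 1) := by
    rw [exp_add_smul_one, smul_smul, ← Real.exp_add, neg_add_cancel, Real.exp_zero, one_smul]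
  rw [hexp, Matrix.smul_apply, smul_eq_mul]
  exact mul_le_mul_of_nonneg_left (one_apply_le_exp_apply hc i j) (Real.exp_pos _).le

theorem exp_mulVec_neg (hM : Metzler M) {w : Fin n → ℝ} (hw : ∀ i, w i < 0) (i : Fin n) :
    (NormedSpace.exp M *ᵥ w) i < 0 := by
  obtain ⟨r, hr, hle⟩ := hM.exists_pos_smul_one_le_exp
  calc (NormedSpace.exp M *ᵥ w) i
      = ∑ j, NormedSpace.exp M i j * w j := rfl
    _ ≤ ∑ j, r * (1 : Matrix (Fin n) (Fin n) ℝ) i j * w j :=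
      Finset.sum_le_sum fun j _ => mul_le_mul_of_nonpos_right (hle i j) (hw j).le
    _ = r * w i := by simp [one_apply]
    _ < 0 := mul_neg_of_pos_of_neg hr (hw i)

theorem exp_smul_mulVec_add_integral_lt {A : Matrix (Fin n) (Fin n) ℝ} (hA : Metzler A)
    {lam v : Fin n → ℝ} (hlam : ∀ i, (A *ᵥ lam + v) i < 0) {τ : ℝ} (hτ : 0 < τ) (i : Fin n) :
    (NormedSpace.exp (τ • A) *ᵥ lam + ∫ s in (0 : ℝ)..τ, NormedSpace.exp (s • A) *ᵥ v) i
      < lam i := by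
  have hcont := continuous_exp_smul_mulVec A (A *ᵥ lam + v)
  rw [exp_smul_mulVec_add_integral, Pi.add_apply,
    eval_intervalIntegral (hcont.intervalIntegrable 0 τ)]
  have hneg := intervalIntegral_neg_of_neg_on
    (((continuous_apply i).comp hcont).intervalIntegrable 0 τ)
    (fun s hs => (hA.smul hs.1.le).exp_mulVec_neg hlam i) hτ
  exact add_lt_of_neg_right _ hneg

end Metzler

theorem metzler_exp_integral_le_general {n : ℕ}
    (A : Matrix (Fin n) (Fin n) ℝ) (hA : Metzler A)
    (lam v : Fin n → ℝ)
    (hlam : ∀ i, (A *ᵥ lam + v) i < 0) :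
    ∀ τ : ℝ, 0 ≤ τ →
      (∀ i, (NormedSpace.exp (τ • A) *ᵥ lam
        + ∫ s in (0:ℝ)..τ, NormedSpace.exp (s • A) *ᵥ v) i ≤ lam i) ∧
      (0 < τ → ∀ i, (NormedSpace.exp (τ • A) *ᵥ lam
        + ∫ s in (0:ℝ)..τ, NormedSpace.exp (s • A) *ᵥ v) i < lam i) := by
  intro τ hτ
  refine ⟨fun i => ?_, fun hτ_pos => hA.exp_smul_mulVec_add_integral_lt hlam hτ_pos⟩
  rcases hτ.eq_or_lt with rfl | hτ_pos
  · simp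
  · exact (hA.exp_smul_mulVec_add_integral_lt hlam hτ_pos i).le

/-- If `A` is Metzler, `v ≥ 0` and `Aλ + v < 0` entrywise, then
`e^{Aτ}λ + ∫₀^τ e^{As}v ds ≤ λ` entrywise for every `τ ≥ 0`, strictly whenever `τ > 0`. -/
theorem metzler_exp_integral_le {n : ℕ}
    (A : Matrix (Fin n) (Fin n) ℝ) (hA : Metzler A)
    (lam v : Fin n → ℝ) (hv : ∀ i, 0 ≤ v i)
    (hlam : ∀ i, (A *ᵥ lam + v) i < 0) :
    ∀ τ : ℝ, 0 ≤ τ →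
      (∀ i, (NormedSpace.exp (τ • A) *ᵥ lam
        + ∫ s in (0:ℝ)..τ, NormedSpace.exp (s • A) *ᵥ v) i ≤ lam i) ∧
      (0 < τ → ∀ i, (NormedSpace.exp (τ • A) *ᵥ lam
        + ∫ s in (0:ℝ)..τ, NormedSpace.exp (s • A) *ᵥ v) i < lam i) :=
  metzler_exp_integral_le_general A hA lam v hlam
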